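/- (Lemma A.1, fifth inequality) Let 0 < t < s be real numbers, let θ ∈ ℂ with |θ| ≤ 1/30, let x ∈ ℝ³ and j ∈ {1,2,3}. Then ∑_{λ∈{0,1}} ∫_{{k∈ℝ³ : t ≤ |k| ≤ s}} |k| · |G(θ)_j(x,(k,λ))|² d³k ≤ α³ · min( C₁² , C₂² · s²·(s−t) ). -/

import Mathlib

open MeasureTheory

noncomputable section

/-- `ℝ³` as a Euclidean space. -/
abbrev R3 : Type := EuclideanSpace ℝ (Fin 3)

/-- The coupling function `G(θ)(x,(k,λ))`, `j`-th component. -/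
def Gfun (α : ℝ) (ε : R3 → Fin 2 → Fin 3 → ℂ) (θ : ℂ)
    (x k : R3) (lam : Fin 2) (j : Fin 3) : ℂ :=
  ((α ^ ((3:ℝ)/2) / (2 * Real.pi) ^ ((3:ℝ)/2) : ℝ) : ℂ) * Complex.exp (-θ) *
    Complex.exp (-(Complex.exp (-(2*θ))) * ((‖k‖ ^ 2 : ℝ) : ℂ)) *
    (((2 * ‖k‖) ^ (-(1:ℝ)/2) : ℝ) : ℂ) *
    Complex.exp (-Complex.I * (α : ℂ) * ((inner ℝ k x : ℝ) : ℂ)) *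
    ε k lam j

/-- The polarization vectors form an a.e. orthonormal transversal family. -/
def Polarization (ε : R3 → Fin 2 → Fin 3 → ℂ) : Prop :=
  Measurable ε ∧
  ∀ᵐ k ∂(volume : Measure R3), k ≠ 0 →
    ∀ lam mu : Fin 2,
      (∑ j : Fin 3, (starRingEnd ℂ) (ε k lam j) * ε k mu j) = (if lam = mu then 1 else 0) ∧
      (∑ j : Fin 3, ((k j : ℝ) : ℂ) * ε k lam j) = 0

def C1 : ℝ := Real.exp (3/4) / (2 * Real.pi)

def C2 : ℝ := Real.sqrt 2 * Real.exp (1/4) / (2 * Real.pi)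

def C1om : ℝ := Real.exp (1/2) * Real.pi ^ ((1:ℝ)/4) / (2 ^ ((1:ℝ)/4) * (2 * Real.pi))

/-!
The factor `|k|` cancels against `(2|k|)^{-1/2}` squared, so the integrand is
`α³ e^{-2 Re θ} / (2 (2π)³) · |ε(k,λ)_j|² · exp (-2 Re (e^{-2θ}) |k|²)`, and orthonormality gives
`|ε(k,λ)_j| ≤ 1`. For `|θ| ≤ 1/30` we have `Re e^{-2θ} ≥ 1/2` (from `|e^z - 1| ≤ 2|z|`) and
`e^{-2 Re θ} ≤ e^{1/2}`. The Gaussian integral over the shell is bounded both by its value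
`(π / (2 Re e^{-2θ}))^{3/2} ≤ π^{3/2}` over all of `ℝ³` and, the integrand being at most `1`, by the
volume `(4π/3)(s³ - t³) ≤ 4π s²(s - t)` of the shell; these give the two terms of the minimum.
-/

open Real Metric

lemma Complex.one_sub_two_mul_norm_le_re_exp {z : ℂ} (hz : ‖z‖ ≤ 1) :
    1 - 2 * ‖z‖ ≤ (Complex.exp z).re := by
  have h := (Complex.abs_re_le_norm (Complex.exp z - 1)).trans (Complex.norm_exp_sub_one_le hz)
  rw [Complex.sub_re, Complex.one_re] at h
  linarith [neg_abs_le ((Complex.exp z).re - 1)]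

lemma norm_le_one_of_sum_conj_mul_self_eq_one {ι : Type*} [Fintype ι] {v : ι → ℂ}
    (hv : ∑ i, (starRingEnd ℂ) (v i) * v i = 1) (i : ι) : ‖v i‖ ≤ 1 := by
  have hsum : ∑ i, ‖v i‖ ^ 2 = 1 := by
    simp only [Complex.conj_mul'] at hv
    exact_mod_cast hv
  have hi : ‖v i‖ ^ 2 ≤ 1 :=
    hsum ▸ Finset.single_le_sum (fun i _ => sq_nonneg ‖v i‖) (Finset.mem_univ i)
  exact (sq_le_one_iff₀ (norm_nonneg _)).mp hi

lemma Polarization.norm_le_one {ε : R3 → Fin 2 → Fin 3 → ℂ} (hε : Polarization ε) :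
    ∀ᵐ k ∂(volume : Measure R3), k ≠ 0 → ∀ lam j, ‖ε k lam j‖ ≤ 1 := by
  filter_upwards [hε.2] with k hk hk0 lam j
  exact norm_le_one_of_sum_conj_mul_self_eq_one (by simpa using (hk hk0 lam lam).1) j

section Gaussian

variable {V : Type*} [NormedAddCommGroup V] [InnerProductSpace ℝ V] [FiniteDimensional ℝ V]
  [MeasurableSpace V] [BorelSpace V]

lemma integrable_exp_neg_mul_sq_norm {b : ℝ} (hb : 0 < b) :
    Integrable (fun v : V => rexp (-b * ‖v‖ ^ 2)) volume :=
  .of_integral_ne_zero <| by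
    rw [GaussianFourier.integral_rexp_neg_mul_sq_norm (V := V) hb]
    positivity

lemma setIntegral_exp_neg_mul_sq_norm_le {b : ℝ} (hb : 0 < b) (S : Set V) :
    ∫ v in S, rexp (-b * ‖v‖ ^ 2) ≤ (π / b) ^ (Module.finrank ℝ V / 2 : ℝ) := by
  rw [← GaussianFourier.integral_rexp_neg_mul_sq_norm hb]
  exact setIntegral_le_integral (integrable_exp_neg_mul_sq_norm hb)
    (ae_of_all _ fun _ => (exp_pos _).le)

end Gaussian

lemma setIntegral_exp_neg_mul_sq_norm_le_measureReal {E : Type*} [NormedAddCommGroup E]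
    [MeasurableSpace E] {μ : Measure E} {b : ℝ} (hb : 0 ≤ b) {S : Set E} (hS : μ S ≠ ⊤) :
    ∫ v in S, rexp (-b * ‖v‖ ^ 2) ∂μ ≤ μ.real S := by
  have hle : ∀ v ∈ S, ‖rexp (-b * ‖v‖ ^ 2)‖ ≤ 1 := fun v _ => by
    rw [Real.norm_eq_abs, abs_exp, exp_le_one_iff]
    nlinarith [sq_nonneg ‖v‖]
  simpa using (le_abs_self _).trans (norm_setIntegral_le_of_norm_le_const hS.lt_top hle)

lemma volume_real_shell_le {s t : ℝ} (ht : 0 ≤ t) (hts : t ≤ s) :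
    volume.real {k : R3 | t ≤ ‖k‖ ∧ ‖k‖ ≤ s} ≤ 4 * π * s ^ 2 * (s - t) := by
  have hshell : {k : R3 | t ≤ ‖k‖ ∧ ‖k‖ ≤ s} = closedBall 0 s \ ball 0 t := by
    ext k
    simp [and_comm]
  have hball : ball (0 : R3) t ⊆ closedBall 0 s :=
    ball_subset_closedBall.trans (closedBall_subset_closedBall hts)
  have hvol : ∀ r : ℝ, 0 ≤ r → volume.real (ball (0 : R3) r) = 4 / 3 * π * r ^ 3 := fun r hr => by
    rw [measureReal_def, EuclideanSpace.volume_ball_fin_three, ENNReal.toReal_mul,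
      ENNReal.toReal_pow, ENNReal.toReal_ofReal hr, ENNReal.toReal_ofReal (by positivity)]
    ring
  rw [hshell, measureReal_sdiff hball measurableSet_ball measure_closedBall_lt_top.ne,
    Measure.addHaar_real_closedBall_eq_addHaar_real_ball, hvol s (ht.trans hts), hvol t ht]
  have : 0 ≤ π * (s - t) ^ 2 * (2 * s + t) := mul_nonneg (by positivity) (by linarith)
  nlinarith [pi_pos]

lemma norm_mul_norm_Gfun_sq {α : ℝ} (hα : 0 ≤ α) (ε : R3 → Fin 2 → Fin 3 → ℂ) (θ : ℂ)
    (x : R3) {k : R3} (hk0 : k ≠ 0) (lam : Fin 2) (j : Fin 3) :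
    ‖k‖ * ‖Gfun α ε θ x k lam j‖ ^ 2 =
      α ^ 3 / (2 * π) ^ 3 * rexp (-(2 * θ.re)) / 2 *
        rexp (-(2 * (Complex.exp (-(2 * θ))).re) * ‖k‖ ^ 2) * ‖ε k lam j‖ ^ 2 := by
  have hk : 0 < ‖k‖ := norm_pos_iff.mpr hk0
  have three_halves_sq : ∀ y : ℝ, 0 ≤ y → (y ^ ((3:ℝ) / 2)) ^ 2 = y ^ 3 := fun y hy => by
    rw [← Real.rpow_mul_natCast hy]; norm_num
  have inv_sqrt_sq : ((2 * ‖k‖) ^ (-(1:ℝ) / 2)) ^ 2 = (2 * ‖k‖)⁻¹ := by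
    rw [← Real.rpow_mul_natCast (by positivity)]; norm_num [Real.rpow_neg_one]
  have hre : (-Complex.exp (-(2 * θ)) * ((‖k‖ ^ 2 : ℝ) : ℂ)).re =
      -((Complex.exp (-(2 * θ))).re * ‖k‖ ^ 2) := by
    rw [Complex.re_mul_ofReal, Complex.neg_re, neg_mul]
  have hphase : (-Complex.I * α * ((inner ℝ k x : ℝ) : ℂ)).re = 0 := by simp
  simp only [Gfun, norm_mul, Complex.norm_real, Real.norm_eq_abs, Complex.norm_exp,
    Complex.neg_re, hre, hphase, Real.exp_zero, mul_one]
  rw [abs_of_nonneg (by positivity), abs_of_nonneg (by positivity)]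
  calc _ = (α ^ ((3:ℝ) / 2) / (2 * π) ^ ((3:ℝ) / 2)) ^ 2 *
        (((2 * ‖k‖) ^ (-(1:ℝ) / 2)) ^ 2 * ‖k‖) * (rexp (-θ.re) * rexp (-θ.re)) *
        (rexp (-((Complex.exp (-(2 * θ))).re * ‖k‖ ^ 2)) *
          rexp (-((Complex.exp (-(2 * θ))).re * ‖k‖ ^ 2))) * ‖ε k lam j‖ ^ 2 := by ring
    _ = _ := by
      rw [div_pow, three_halves_sq α hα, three_halves_sq _ (by positivity), inv_sqrt_sq,
        ← Real.exp_add, ← Real.exp_add]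
      field_simp
      ring_nf

lemma sum_setIntegral_norm_mul_norm_Gfun_sq_le {α : ℝ} (hα : 0 ≤ α)
    {ε : R3 → Fin 2 → Fin 3 → ℂ} (hε : Polarization ε) {θ : ℂ}
    (hθ : 0 < (Complex.exp (-(2 * θ))).re) (x : R3) (j : Fin 3) (S : Set R3) :
    ∑ lam : Fin 2, ∫ k in S, ‖k‖ * ‖Gfun α ε θ x k lam j‖ ^ 2 ≤
      α ^ 3 / (2 * π) ^ 3 * rexp (-(2 * θ.re)) *
        ∫ k in S, rexp (-(2 * (Complex.exp (-(2 * θ))).re) * ‖k‖ ^ 2) := by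
  set c := α ^ 3 / (2 * π) ^ 3 * rexp (-(2 * θ.re))
  set g := fun k : R3 => rexp (-(2 * (Complex.exp (-(2 * θ))).re) * ‖k‖ ^ 2)
  have hterm : ∀ lam, ∫ k in S, ‖k‖ * ‖Gfun α ε θ x k lam j‖ ^ 2 ≤ ∫ k in S, c / 2 * g k := by
    intro lam
    refine integral_mono_of_nonneg (ae_of_all _ fun k => by positivity)
      ((integrable_exp_neg_mul_sq_norm (by linarith)).integrableOn.const_mul _) ?_
    filter_upwards [ae_restrict_of_ae hε.norm_le_one, ae_restrict_of_ae (volume.ae_ne 0)]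
      with k hε1 hk0
    rw [norm_mul_norm_Gfun_sq hα ε θ x hk0]
    exact mul_le_of_le_one_right (by positivity) (pow_le_one₀ (norm_nonneg _) (hε1 hk0 lam j))
  calc _ ≤ ∑ lam : Fin 2, ∫ k in S, c / 2 * g k := Finset.sum_le_sum fun lam _ => hterm lam
    _ = c * ∫ k in S, g k := by
      rw [Finset.sum_const, Finset.card_univ, Fintype.card_fin, integral_const_mul, nsmul_eq_mul]
      ring

lemma C1_sq : C1 ^ 2 = rexp (3 / 2) / (2 * π) ^ 2 := by
  rw [C1, div_pow, ← exp_nat_mul]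
  norm_num

lemma C2_sq : C2 ^ 2 = 2 * rexp (1 / 2) / (2 * π) ^ 2 := by
  rw [C2, div_pow, mul_pow, sq_sqrt zero_le_two, ← exp_nat_mul]
  norm_num

lemma pi_rpow_three_halves_le : π ^ ((3:ℝ) / 2) ≤ 2 * π := by
  rw [show (3:ℝ) / 2 = 1 + 1 / 2 by norm_num, rpow_add pi_pos, rpow_one, ← sqrt_eq_rpow,
    mul_comm 2]
  gcongr
  rw [sqrt_le_left zero_le_two]
  linarith [pi_lt_four]

lemma mul_pi_rpow_three_halves_le_C1_sq {α E : ℝ} (hα : 0 ≤ α) (hE : E ≤ rexp (3 / 2)) :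
    α ^ 3 / (2 * π) ^ 3 * E * π ^ ((3:ℝ) / 2) ≤ α ^ 3 * C1 ^ 2 :=
  calc _ ≤ α ^ 3 / (2 * π) ^ 3 * rexp (3 / 2) * (2 * π) := by
        gcongr
        exact pi_rpow_three_halves_le
    _ = α ^ 3 * C1 ^ 2 := by
        rw [C1_sq]
        field_simp

lemma mul_four_pi_mul_le_C2_sq {α E : ℝ} (hα : 0 ≤ α) (hE : E ≤ rexp (1 / 2)) {r : ℝ}
    (hr : 0 ≤ r) : α ^ 3 / (2 * π) ^ 3 * E * (4 * π * r) ≤ α ^ 3 * (C2 ^ 2 * r) :=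
  calc _ ≤ α ^ 3 / (2 * π) ^ 3 * rexp (1 / 2) * (4 * π * r) := by gcongr
    _ = α ^ 3 * (C2 ^ 2 * r) := by
        rw [C2_sq]
        field_simp
        ring

theorem lemmaA1_fifth_general
    (α : ℝ) (hα0 : 0 < α)
    (ε : R3 → Fin 2 → Fin 3 → ℂ) (hε : Polarization ε)
    (s t : ℝ) (ht : 0 < t) (hts : t < s)
    (θ : ℂ) (hθ : ‖θ‖ ≤ 1/30)
    (x : R3) (j : Fin 3) :
    (∑ lam : Fin 2, ∫ k in {k : R3 | t ≤ ‖k‖ ∧ ‖k‖ ≤ s},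
        ‖k‖ * ‖Gfun α ε θ x k lam j‖ ^ 2)
      ≤ α ^ 3 * min (C1 ^ 2) (C2 ^ 2 * s ^ 2 * (s - t)) := by
  set S := {k : R3 | t ≤ ‖k‖ ∧ ‖k‖ ≤ s}
  set a := (Complex.exp (-(2 * θ))).re
  set c := α ^ 3 / (2 * π) ^ 3 * rexp (-(2 * θ.re))
  have h2θ : ‖-(2 * θ)‖ = 2 * ‖θ‖ := by rw [norm_neg, norm_mul, Complex.norm_two]
  have ha : 1 / 2 ≤ a := by
    have := Complex.one_sub_two_mul_norm_le_re_exp (z := -(2 * θ)) (by rw [h2θ]; linarith)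
    rw [h2θ] at this
    linarith
  have hE : rexp (-(2 * θ.re)) ≤ rexp (1 / 2) :=
    exp_le_exp.mpr (by linarith [neg_abs_le θ.re, Complex.abs_re_le_norm θ])
  have hS : volume S ≠ ⊤ :=
    (isBounded_closedBall.subset fun k hk => mem_closedBall_zero_iff.mpr hk.2).measure_lt_top.ne
  have hgauss : ∫ k in S, rexp (-(2 * a) * ‖k‖ ^ 2) ≤ π ^ ((3:ℝ) / 2) := by
    refine (setIntegral_exp_neg_mul_sq_norm_le (by linarith) S).trans ?_
    rw [finrank_euclideanSpace_fin, Nat.cast_ofNat]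
    exact rpow_le_rpow (by positivity) (div_le_self pi_pos.le (by linarith)) (by norm_num)
  have hshell : ∫ k in S, rexp (-(2 * a) * ‖k‖ ^ 2) ≤ 4 * π * s ^ 2 * (s - t) :=
    (setIntegral_exp_neg_mul_sq_norm_le_measureReal (by linarith) hS).trans
      (volume_real_shell_le ht.le hts.le)
  calc _ ≤ c * ∫ k in S, rexp (-(2 * a) * ‖k‖ ^ 2) :=
        sum_setIntegral_norm_mul_norm_Gfun_sq_le hα0.le hε (show 0 < a by linarith) x j S
    _ ≤ min (c * π ^ ((3:ℝ) / 2)) (c * (4 * π * s ^ 2 * (s - t))) := by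
        rw [← mul_min_of_nonneg _ _ (by positivity)]
        gcongr
        exact le_min hgauss hshell
    _ ≤ α ^ 3 * min (C1 ^ 2) (C2 ^ 2 * s ^ 2 * (s - t)) := by
        rw [mul_min_of_nonneg _ _ (by positivity)]
        refine min_le_min (mul_pi_rpow_three_halves_le_C1_sq hα0.le
          (hE.trans (exp_le_exp.mpr (by norm_num)))) ?_
        rw [mul_assoc (4 * π), mul_assoc (C2 ^ 2)]
        exact mul_four_pi_mul_le_C2_sq hα0.le hE (mul_nonneg (sq_nonneg s) (sub_nonneg.mpr hts.le))

/-- Lemma A.1, fifth inequality. -/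
theorem lemmaA1_fifth
    (α : ℝ) (hα0 : 0 < α) (hα1 : α ≤ 1)
    (ε : R3 → Fin 2 → Fin 3 → ℂ) (hε : Polarization ε)
    (s t : ℝ) (ht : 0 < t) (hts : t < s)
    (θ : ℂ) (hθ : ‖θ‖ ≤ 1/30)
    (x : R3) (j : Fin 3) :
    (∑ lam : Fin 2, ∫ k in {k : R3 | t ≤ ‖k‖ ∧ ‖k‖ ≤ s},
        ‖k‖ * ‖Gfun α ε θ x k lam j‖ ^ 2)
      ≤ α ^ 3 * min (C1 ^ 2) (C2 ^ 2 * s ^ 2 * (s - t)) :=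
  lemmaA1_fifth_general α hα0 ε hε s t ht hts θ hθ x j

end
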